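/- Let A be a unital algebra and q ∈ k nonzero. The map R(a⊗b) = q⁻¹·ab⊗1 + q·1⊗ab − q⁻¹·a⊗b on A⊗A satisfies the Hecke relation (R + q⁻¹·id)∘(R − q·id) = 0. -/

import Mathlib

open TensorProduct LinearMap

/-- For a unital `k`-algebra `A` and nonzero `q ∈ k`, the map
`R(a⊗b) = q⁻¹·ab⊗1 + q·1⊗ab − q⁻¹·a⊗b` on `A ⊗ A` satisfies the Hecke relation
`(R + q⁻¹·id) ∘ (R − q·id) = 0`. -/
theorem stmt14 (k A : Type*) [Field k] [Ring A] [Algebra k A]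
    (q : k) (hq : q ≠ 0)
    (R : A ⊗[k] A →ₗ[k] A ⊗[k] A)
    (hR : ∀ a b : A, R (a ⊗ₜ[k] b) =
      q⁻¹ • ((a * b) ⊗ₜ[k] (1 : A)) + q • ((1 : A) ⊗ₜ[k] (a * b)) - q⁻¹ • (a ⊗ₜ[k] b)) :
    (R + q⁻¹ • LinearMap.id) ∘ₗ (R - q • LinearMap.id) = 0 := by
  apply TensorProduct.ext'
  intro a b
  simp only [comp_apply, LinearMap.add_apply, LinearMap.sub_apply, LinearMap.smul_apply, id_apply, LinearMap.zero_apply,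
    map_add, map_sub, map_smul, hR, mul_one, one_mul]
  match_scalars <;> field_simp <;> ring
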